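/- Let w be a hyperbolic isometry of a euclidean space E with move-set U + μ in standard form (μ ≠ 0). Then Min(w) is the unique affine subspace B of E of dimension dim(U^⊥) that is stabilized by w and on which every point is moved by the same vector. -/

import Mathlib

/-!
By Mazur–Ulam `w` is affine, with linear part an orthogonal map `A`, so the displacement
`x ↦ w x -ᵥ x` is affine with linear part `A - 1`. Hence `U = range (A - 1)`, and since `A` is
orthogonal, `Uᗮ = ker (A - 1)`. As `μ ⊥ U`, `μ` is the unique vector of least norm in `U + μ`,
so `Min(w)` is the fibre of the displacement over `μ`: a coset of `ker (A - 1) = Uᗮ`, stable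
under `w` because `A μ = μ`. Conversely, on a `w`-stable subspace with constant displacement `ν`
we get `A ν = ν`, so `ν ∈ Uᗮ ∩ (U + μ) = {μ}`; such a subspace lies in `Min(w)` and has the
same dimension, hence equals it.
-/

open Module

theorem LinearIsometryEquiv.orthogonal_range_sub_one {𝕜 V : Type*} [RCLike 𝕜]
    [NormedAddCommGroup V] [InnerProductSpace 𝕜 V] (A : V ≃ₗᵢ[𝕜] V) :
    (LinearMap.range ((A.toLinearEquiv : V →ₗ[𝕜] V) - 1))ᗮ =
      LinearMap.ker ((A.toLinearEquiv : V →ₗ[𝕜] V) - 1) := by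
  ext v
  have hA : ∀ u, inner 𝕜 (A u) v = inner 𝕜 u (A.symm v) := fun u => by
    rw [← A.inner_map_map u, A.apply_symm_apply]
  calc v ∈ (LinearMap.range ((A.toLinearEquiv : V →ₗ[𝕜] V) - 1))ᗮ
      ↔ ∀ u, inner 𝕜 u (A.symm v) = inner 𝕜 u v := by
        simp [Submodule.mem_orthogonal, inner_sub_left, hA, sub_eq_zero]
    _ ↔ A.symm v = v := ⟨ext_inner_left 𝕜, fun h u => by rw [h]⟩
    _ ↔ _ := by simp [A.symm_apply_eq, sub_eq_zero, eq_comm (a := v)]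

theorem Submodule.eq_of_mem_orthogonal_of_mem_image_add {𝕜 V : Type*} [RCLike 𝕜]
    [NormedAddCommGroup V] [InnerProductSpace 𝕜 V] {U : Submodule 𝕜 V} {μ ν : V}
    (hμ : μ ∈ Uᗮ) (hν : ν ∈ (· + μ) '' (U : Set V)) (hν' : ν ∈ Uᗮ) : ν = μ := by
  obtain ⟨u, hu, rfl⟩ := hν
  have hu' : u ∈ Uᗮ := by simpa using Uᗮ.sub_mem hν' hμ
  simp [Submodule.disjoint_def.mp U.orthogonal_disjoint u hu hu']

section Orthogonal

variable {V : Type*} [NormedAddCommGroup V] [InnerProductSpace ℝ V]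

theorem norm_le_norm_add_of_inner_eq_zero {u v : V} (h : inner ℝ u v = 0) :
    ‖v‖ ≤ ‖u + v‖ := by
  have := norm_add_sq_eq_norm_sq_add_norm_sq_real h
  nlinarith [norm_nonneg v, norm_nonneg (u + v), mul_self_nonneg ‖u‖]

theorem norm_add_le_norm_iff_of_inner_eq_zero {u v : V} (h : inner ℝ u v = 0) :
    ‖u + v‖ ≤ ‖v‖ ↔ u = 0 := by
  refine ⟨fun hle => ?_, fun hu => by simp [hu]⟩
  have := norm_add_sq_eq_norm_sq_add_norm_sq_real h
  have : ‖u‖ * ‖u‖ ≤ 0 := by nlinarith [norm_nonneg v, norm_nonneg (u + v)]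
  exact norm_eq_zero.mp (by nlinarith [norm_nonneg u])

end Orthogonal

namespace IsometryEquiv

variable {V E : Type*} [NormedAddCommGroup V] [MetricSpace E]

section NormedSpace

variable [NormedSpace ℝ V] [NormedAddTorsor V E] (w : E ≃ᵢ E)

noncomputable def linearPart : V ≃ₗᵢ[ℝ] V := w.toRealAffineIsometryEquiv.linearIsometryEquiv

def displacement (x : E) : V := w x -ᵥ x

theorem exists_displacement_eq {U : Submodule ℝ V} {μ : V}
    (hMov : Set.range w.displacement = (· + μ) '' (U : Set V)) : ∃ x, w.displacement x = μ :=
  hMov.superset ⟨0, U.zero_mem, zero_add μ⟩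

theorem linearPart_vsub (x y : E) : w.linearPart (x -ᵥ y) = w x -ᵥ w y :=
  w.toRealAffineIsometryEquiv.map_vsub x y

theorem displacement_sub_displacement (x y : E) :
    w.displacement x - w.displacement y =
      ((w.linearPart.toLinearEquiv : V →ₗ[ℝ] V) - 1) (x -ᵥ y) := by
  simp [displacement, linearPart_vsub, vsub_sub_vsub_comm]

theorem displacement_apply (x : E) :
    w.displacement (w x) = w.linearPart (w.displacement x) := by
  simp [displacement, linearPart_vsub]

theorem range_displacement (x₀ : E) :
    Set.range w.displacement = (· + w.displacement x₀) ''
      LinearMap.range ((w.linearPart.toLinearEquiv : V →ₗ[ℝ] V) - 1) := by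
  ext v
  constructor
  · rintro ⟨x, rfl⟩
    exact ⟨_, ⟨x -ᵥ x₀, rfl⟩, by simp only [← displacement_sub_displacement, sub_add_cancel]⟩
  · rintro ⟨_, ⟨u, rfl⟩, rfl⟩
    refine ⟨u +ᵥ x₀, sub_eq_iff_eq_add.mp ?_⟩
    simpa only [vadd_vsub] using w.displacement_sub_displacement (u +ᵥ x₀) x₀

theorem setOf_displacement_eq (x₀ : E) :
    {x | w.displacement x = w.displacement x₀} =
      AffineSubspace.mk' x₀ (LinearMap.ker ((w.linearPart.toLinearEquiv : V →ₗ[ℝ] V) - 1)) := by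
  ext x
  simp only [Set.mem_ofPred, SetLike.mem_coe, AffineSubspace.mem_mk', LinearMap.mem_ker,
    ← displacement_sub_displacement, sub_eq_zero]

theorem image_setOf_displacement_eq {ν : V} (hν : w.linearPart ν = ν) :
    w '' {x | w.displacement x = ν} = {x | w.displacement x = ν} := by
  ext x
  refine ⟨?_, fun hx => ⟨w.symm x, ?_, w.apply_symm_apply x⟩⟩
  · rintro ⟨y, hy, rfl⟩
    simp_all [displacement_apply]
  · apply w.linearPart.injective
    rw [← displacement_apply, w.apply_symm_apply, hx, hν]

theorem linearPart_apply_eq_of_mapsTo {S : Set E} (hS : S.Nonempty) (hw : Set.MapsTo w S S)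
    {ν : V} (hν : ∀ x ∈ S, w.displacement x = ν) : w.linearPart ν = ν := by
  obtain ⟨x, hx⟩ := hS
  have := w.displacement_apply x
  rwa [hν x hx, hν _ (hw hx), eq_comm] at this

end NormedSpace

variable [InnerProductSpace ℝ V] [NormedAddTorsor V E] (w : E ≃ᵢ E)

def minSet : Set E := {x | ∀ y, dist (w x) x ≤ dist (w y) y}

theorem minSet_eq {U : Submodule ℝ V} {μ : V} (hμ : μ ∈ Uᗮ)
    (hMov : Set.range w.displacement = (· + μ) '' (U : Set V)) :
    w.minSet = {x | w.displacement x = μ} := by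
  have hdist : ∀ x, dist (w x) x = ‖w.displacement x‖ := fun x => dist_eq_norm_vsub V _ _
  have hdecomp : ∀ x, ∃ u ∈ U, u + μ = w.displacement x := fun x =>
    hMov.subset (Set.mem_range_self x)
  obtain ⟨x₀, hx₀⟩ := w.exists_displacement_eq hMov
  ext x
  obtain ⟨u, hu, hx⟩ := hdecomp x
  simp only [minSet, Set.mem_ofPred, hdist, ← hx, add_eq_right]
  constructor
  · intro h
    exact (norm_add_le_norm_iff_of_inner_eq_zero (U.inner_right_of_mem_orthogonal hu hμ)).mp
      (hx₀ ▸ h x₀)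
  · rintro rfl y
    obtain ⟨u', hu', hy⟩ := hdecomp y
    rw [← hy, zero_add]
    exact norm_le_norm_add_of_inner_eq_zero (U.inner_right_of_mem_orthogonal hu' hμ)

theorem range_linearPart_sub_one {U : Submodule ℝ V} {μ : V}
    (hMov : Set.range w.displacement = (· + μ) '' (U : Set V)) :
    LinearMap.range ((w.linearPart.toLinearEquiv : V →ₗ[ℝ] V) - 1) = U := by
  obtain ⟨x₀, hx₀⟩ := w.exists_displacement_eq hMov
  have h := w.range_displacement x₀
  rw [hx₀, hMov] at h
  exact SetLike.coe_injective (Set.image_injective.mpr (add_left_injective μ) h.symm)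

theorem ker_linearPart_sub_one {U : Submodule ℝ V} {μ : V}
    (hMov : Set.range w.displacement = (· + μ) '' (U : Set V)) :
    LinearMap.ker ((w.linearPart.toLinearEquiv : V →ₗ[ℝ] V) - 1) = Uᗮ := by
  rw [← LinearIsometryEquiv.orthogonal_range_sub_one, w.range_linearPart_sub_one hMov]

theorem linearPart_apply_eq_iff {U : Submodule ℝ V} {μ : V}
    (hMov : Set.range w.displacement = (· + μ) '' (U : Set V)) (ν : V) :
    w.linearPart ν = ν ↔ ν ∈ Uᗮ := by
  simp [← w.ker_linearPart_sub_one hMov, sub_eq_zero]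

end IsometryEquiv

theorem minSet_unique_stabilized_subspace_general
    {V E : Type*} [NormedAddCommGroup V] [InnerProductSpace ℝ V] [FiniteDimensional ℝ V]
    [MetricSpace E] [NormedAddTorsor V E] (w : E ≃ᵢ E)
    (U : Submodule ℝ V) (μ : V) (hμ : μ ∈ Uᗮ)
    (hMov : {v : V | ∃ x : E, w x -ᵥ x = v} = (fun u => u + μ) '' (U : Set V)) :
    ∃ B : AffineSubspace ℝ E,
      (B : Set E) = {x : E | ∀ y : E, dist (w x) x ≤ dist (w y) y} ∧
      ((B : Set E).Nonempty ∧ finrank ℝ B.direction = finrank ℝ Uᗮ ∧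
        w '' (B : Set E) = (B : Set E) ∧ ∃ ν : V, ∀ x ∈ B, w x -ᵥ x = ν) ∧
      (∀ B' : AffineSubspace ℝ E,
        ((B' : Set E).Nonempty ∧ finrank ℝ B'.direction = finrank ℝ Uᗮ ∧
          w '' (B' : Set E) = (B' : Set E) ∧ ∃ ν : V, ∀ x ∈ B', w x -ᵥ x = ν) →
        B' = B) := by
  have hMov' : Set.range w.displacement = (· + μ) '' (U : Set V) := hMov
  obtain ⟨x₀, hx₀⟩ := w.exists_displacement_eq hMov'
  have hB : (AffineSubspace.mk' x₀ Uᗮ : Set E) = {x | w.displacement x = μ} := by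
    rw [← w.ker_linearPart_sub_one hMov', ← hx₀, w.setOf_displacement_eq]
  refine ⟨AffineSubspace.mk' x₀ Uᗮ, hB.trans (w.minSet_eq hμ hMov').symm,
    ⟨⟨x₀, AffineSubspace.self_mem_mk' _ _⟩, by rw [AffineSubspace.direction_mk'], ?_, μ,
      fun x hx => hB.subset hx⟩, ?_⟩
  · rw [hB]
    exact w.image_setOf_displacement_eq ((w.linearPart_apply_eq_iff hMov' μ).mpr hμ)
  rintro B' ⟨⟨p, hp⟩, hdim, hstab, ν, hν⟩
  have hνμ : ν = μ := Submodule.eq_of_mem_orthogonal_of_mem_image_add hμ (hMov' ▸ ⟨p, hν p hp⟩)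
    ((w.linearPart_apply_eq_iff hMov' ν).mp (w.linearPart_apply_eq_of_mapsTo ⟨p, hp⟩
      (Set.mapsTo_iff_image_subset.mpr hstab.subset) hν))
  have hle : B' ≤ AffineSubspace.mk' x₀ Uᗮ := fun x hx =>
    hB.superset (show w.displacement x = μ from hνμ ▸ hν x hx)
  exact AffineSubspace.eq_of_direction_eq_of_nonempty_of_le (Submodule.eq_of_le_of_finrank_eq
    (AffineSubspace.direction_le hle) (by rw [hdim, AffineSubspace.direction_mk'])) ⟨p, hp⟩ hle

/-- For a hyperbolic isometry `w` of a euclidean space, with move-set `U + μ` in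
standard form (`μ ∈ U ᗮ` nonzero), the min-set `Min(w)` is the unique (nonempty)
affine subspace `B` of `E` of dimension `dim U ᗮ` that is stabilized by `w` and on
which every point is moved by the same vector. -/
theorem minSet_unique_stabilized_subspace
    {V E : Type*} [NormedAddCommGroup V] [InnerProductSpace ℝ V] [FiniteDimensional ℝ V]
    [MetricSpace E] [NormedAddTorsor V E] (w : E ≃ᵢ E)
    (U : Submodule ℝ V) (μ : V) (hμ : μ ∈ Uᗮ) (hμ0 : μ ≠ 0)
    (hMov : {v : V | ∃ x : E, w x -ᵥ x = v} = (fun u => u + μ) '' (U : Set V)) :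
    ∃ B : AffineSubspace ℝ E,
      (B : Set E) = {x : E | ∀ y : E, dist (w x) x ≤ dist (w y) y} ∧
      ((B : Set E).Nonempty ∧ finrank ℝ B.direction = finrank ℝ Uᗮ ∧
        w '' (B : Set E) = (B : Set E) ∧ ∃ ν : V, ∀ x ∈ B, w x -ᵥ x = ν) ∧
      (∀ B' : AffineSubspace ℝ E,
        ((B' : Set E).Nonempty ∧ finrank ℝ B'.direction = finrank ℝ Uᗮ ∧
          w '' (B' : Set E) = (B' : Set E) ∧ ∃ ν : V, ∀ x ∈ B', w x -ᵥ x = ν) →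
        B' = B) :=
  minSet_unique_stabilized_subspace_general w U μ hμ hMov
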